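/- Let n ≥ 2, (a, b) ∈ Ω_n, and L = L⁽ⁿ⁾₍ₐ,ᵦ₎. Then Orb(L, ω^a) = Orb(L, 1) if and only if n/a is odd, and Orb(L, ω^b·j) = Orb(L, j) if and only if n/b is odd. -/

import Mathlib

/-!
Since `ωⁿ = j² = -1` and `ω j ω = j`, the operation `∘` acts on exponents:
`ωᵘ ∘ ωᵛ = ω^(2u - v)`, `ωᵘj ∘ ωᵛ = ω^(v + n)`, `ωᵘ ∘ ωᵛj = ω^(v - n) j` and
`ωᵘj ∘ ωᵛj = ω^(2u - v) j`. Because `x ↦ a ∘ x` is an involution, the orbits of a `∘`-closed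
set partition it, so `Orb(L, ωᵃ) = Orb(L, 1)` just says `ωᵃ ∈ Orb(L, 1)`. If `n / a` is even, the
powers `ωᵉ` with `2a ∣ e` form a `∘`-stable subset of `L` containing `1` but, as `ω` has order
`2n`, not `ωᵃ`. If `n = a (2t + 1)`, then `j ∘ 1 = ωⁿ` and `ω^(a(t+1)) ∘ ωⁿ = ωᵃ`. The
reflections `ωᵇ j` and `j` are handled in the same way, with `2b ∣ e` as the invariant. Only these
relations and the order of `ω` enter, so the argument is carried out in an arbitrary group.
-/

noncomputable section

open Matrix

local notation "ℍ" => Quaternion ℝ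

/-- The binary operation `a ∘ b = a * b⁻¹ * a`. -/
def circ {K : Type*} [Group K] (a b : K) : K := a * b⁻¹ * a

/-- A set is closed under `circ`. -/
def CircClosed {K : Type*} [Group K] (S : Set K) : Prop :=
  ∀ a ∈ S, ∀ b ∈ S, circ a b ∈ S

/-- The closure of a set under `circ`: the smallest superset closed under `circ`. -/
def circClosure {K : Type*} [Group K] (X : Set K) : Set K :=
  ⋂₀ {S : Set K | X ⊆ S ∧ CircClosed S}

/-- `L` is a reflection system for the subgroup `K`. -/
def IsReflectionSystem {G : Type*} [Group G] (K : Subgroup G) (L : Set G) : Prop :=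
  Subgroup.closure L = K ∧ CircClosed L ∧ (1 : G) ∈ L

/-- `H` is a normal subgroup of `K` (both given as subgroups of an ambient group). -/
def NormalIn {G : Type*} [Group G] (H K : Subgroup G) : Prop :=
  H ≤ K ∧ ∀ k ∈ K, ∀ h ∈ H, k * h * k⁻¹ ∈ H

/-- The set `L·H`. -/
def mulSet {G : Type*} [Group G] (L : Set G) (H : Subgroup G) : Set G :=
  {x | ∃ l ∈ L, ∃ h ∈ H, x = l * h}

/-- The orbit of `b` in `L`: smallest subset of `L` containing `b` and closed under
`x ↦ a ∘ x` for all `a ∈ L`. -/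
def orb {K : Type*} [Group K] (L : Set K) (b : K) : Set K :=
  ⋂₀ {S : Set K | b ∈ S ∧ S ⊆ L ∧ ∀ a ∈ L, ∀ x ∈ S, circ a x ∈ S}

lemma mk_ne_zero_re {a b c d : ℝ} (h : a ≠ 0) : (⟨a,b,c,d⟩ : ℍ) ≠ 0 :=
  fun h0 => h (congrArg QuaternionAlgebra.re h0)

lemma mk_ne_zero_imI {a b c d : ℝ} (h : b ≠ 0) : (⟨a,b,c,d⟩ : ℍ) ≠ 0 :=
  fun h0 => h (congrArg QuaternionAlgebra.imI h0)

lemma mk_ne_zero_imJ {a b c d : ℝ} (h : c ≠ 0) : (⟨a,b,c,d⟩ : ℍ) ≠ 0 :=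
  fun h0 => h (congrArg QuaternionAlgebra.imJ h0)

lemma mk_ne_zero_imK {a b c d : ℝ} (h : d ≠ 0) : (⟨a,b,c,d⟩ : ℍ) ≠ 0 :=
  fun h0 => h (congrArg QuaternionAlgebra.imK h0)

/-- The quaternion `i` as a unit. -/
def iU : ℍˣ := Units.mk0 (⟨0,1,0,0⟩ : ℍ) (mk_ne_zero_imI one_ne_zero)

/-- The quaternion `j` as a unit. -/
def jU : ℍˣ := Units.mk0 (⟨0,0,1,0⟩ : ℍ) (mk_ne_zero_imJ one_ne_zero)

/-- The quaternion `k` as a unit. -/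
def kU : ℍˣ := Units.mk0 (⟨0,0,0,1⟩ : ℍ) (mk_ne_zero_imK one_ne_zero)

/-- The quaternion `ζ = (1+i+j+k)/2` as a unit. -/
def zetaU : ℍˣ := Units.mk0 (⟨1/2,1/2,1/2,1/2⟩ : ℍ) (mk_ne_zero_re (by norm_num))

/-- The quaternion `(1+i)/√2` as a unit. -/
def e1iU : ℍˣ :=
  Units.mk0 (⟨1/Real.sqrt 2, 1/Real.sqrt 2, 0, 0⟩ : ℍ)
    (mk_ne_zero_re (by positivity))

/-- The quaternion `(j-k)/√2` as a unit. -/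
def jmkU : ℍˣ :=
  Units.mk0 (⟨0, 0, 1/Real.sqrt 2, -(1/Real.sqrt 2)⟩ : ℍ)
    (mk_ne_zero_imJ (by positivity))

/-- The quaternion `(1 + τ i + σ j)/2`, `τ = (1+√5)/2`, `σ = (1-√5)/2`, as a unit. -/
def iotaU : ℍˣ :=
  Units.mk0 (⟨1/2, ((1+Real.sqrt 5)/2)/2, ((1-Real.sqrt 5)/2)/2, 0⟩ : ℍ)
    (mk_ne_zero_re (by norm_num))

lemma omega_ne_zero (n : ℕ) :
    (⟨Real.cos (Real.pi / n), Real.sin (Real.pi / n), 0, 0⟩ : ℍ) ≠ 0 := by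
  intro h0
  have h1 : Real.cos (Real.pi / n) = 0 := congrArg QuaternionAlgebra.re h0
  have h2 : Real.sin (Real.pi / n) = 0 := congrArg QuaternionAlgebra.imI h0
  have := Real.sin_sq_add_cos_sq (Real.pi / n)
  rw [h1, h2] at this
  norm_num at this

/-- The primitive `2n`-th root of unity `ω = cos(π/n) + sin(π/n) i` as a unit quaternion. -/
def omegaU (n : ℕ) : ℍˣ :=
  Units.mk0 (⟨Real.cos (Real.pi / n), Real.sin (Real.pi / n), 0, 0⟩ : ℍ) (omega_ne_zero n)

/-- The dicyclic group `𝒟ₙ = ⟨ω, j⟩` of order `4n`. -/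
def dicyclic (n : ℕ) : Subgroup ℍˣ := Subgroup.closure {omegaU n, jU}

/-- The binary tetrahedral group `𝒯`. -/
def binTet : Subgroup ℍˣ := Subgroup.closure {iU, zetaU}

/-- The binary octahedral group `𝒪`. -/
def binOct : Subgroup ℍˣ := Subgroup.closure {e1iU, zetaU}

/-- The binary icosahedral group `ℐ`. -/
def binIco : Subgroup ℍˣ := Subgroup.closure {iU, zetaU, iotaU}

/-- `GL₂(ℍ)` as the unit group of the matrix ring. -/
abbrev GL2H := (Matrix (Fin 2) (Fin 2) ℍ)ˣ

def M2 (b : ℍˣ) : Matrix (Fin 2) (Fin 2) ℍ := !![0, (b : ℍ); ((b⁻¹ : ℍˣ) : ℍ), 0]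

lemma M2_mul_self (b : ℍˣ) : M2 b * M2 b = 1 := by
  refine Matrix.ext fun i j => ?_
  fin_cases i <;> fin_cases j <;>
    simp [M2, Matrix.mul_apply, Fin.sum_univ_two, Matrix.one_apply]

/-- The matrix `M_b = [[0, b], [b⁻¹, 0]]` as an element of `GL₂(ℍ)`. -/
def Mb (b : ℍˣ) : GL2H := ⟨M2 b, M2 b, M2_mul_self b, M2_mul_self b⟩

def D1M (h : ℍˣ) : Matrix (Fin 2) (Fin 2) ℍ := !![(h : ℍ), 0; 0, 1]

lemma D1M_mul_inv (h : ℍˣ) : D1M h * D1M h⁻¹ = 1 := by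
  refine Matrix.ext fun i j => ?_
  fin_cases i <;> fin_cases j <;>
    simp [D1M, Matrix.mul_apply, Fin.sum_univ_two, Matrix.one_apply]

lemma D1M_inv_mul (h : ℍˣ) : D1M h⁻¹ * D1M h = 1 := by
  refine Matrix.ext fun i j => ?_
  fin_cases i <;> fin_cases j <;>
    simp [D1M, Matrix.mul_apply, Fin.sum_univ_two, Matrix.one_apply]

/-- The matrix `D₁(h) = diag(h, 1)` as an element of `GL₂(ℍ)`. -/
def D1 (h : ℍˣ) : GL2H := ⟨D1M h, D1M h⁻¹, D1M_mul_inv h, D1M_inv_mul h⟩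

def D2M (h : ℍˣ) : Matrix (Fin 2) (Fin 2) ℍ := !![1, 0; 0, (h : ℍ)]

lemma D2M_mul_inv (h : ℍˣ) : D2M h * D2M h⁻¹ = 1 := by
  refine Matrix.ext fun i j => ?_
  fin_cases i <;> fin_cases j <;>
    simp [D2M, Matrix.mul_apply, Fin.sum_univ_two, Matrix.one_apply]

lemma D2M_inv_mul (h : ℍˣ) : D2M h⁻¹ * D2M h = 1 := by
  refine Matrix.ext fun i j => ?_
  fin_cases i <;> fin_cases j <;>
    simp [D2M, Matrix.mul_apply, Fin.sum_univ_two, Matrix.one_apply]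

/-- The matrix `D₂(h) = diag(1, h)` as an element of `GL₂(ℍ)`. -/
def D2 (h : ℍˣ) : GL2H := ⟨D2M h, D2M h⁻¹, D2M_mul_inv h, D2M_inv_mul h⟩

/-- The group `G(K, L, H)`, generated by `D₁(H)`, `D₂(H)` and `M_L`. -/
def GKLH (H : Subgroup ℍˣ) (L : Set ℍˣ) : Subgroup GL2H :=
  Subgroup.closure (D1 '' (H : Set ℍˣ) ∪ D2 '' (H : Set ℍˣ) ∪ Mb '' L)

/-- `G(K,L,H)` is in canonical form: every `b ∈ K` with `M_b ∈ G(K,L,H)` lies in `L`. -/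
def CanonicalForm (K : Subgroup ℍˣ) (H : Subgroup ℍˣ) (L : Set ℍˣ) : Prop :=
  ∀ b : ℍˣ, b ∈ K → Mb b ∈ GKLH H L → b ∈ L

/-- A reflection: a non-identity element fixing a nonzero vector. -/
def IsReflection (g : GL2H) : Prop :=
  g ≠ 1 ∧ ∃ v : Fin 2 → ℍ, v ≠ 0 ∧ Matrix.mulVec (Units.val g) v = v

/-- The number of reflections in a subgroup of `GL₂(ℍ)`. -/
def reflCount (G : Subgroup GL2H) : ℕ :=
  Nat.card {g : GL2H // g ∈ G ∧ IsReflection g}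

/-- The index set `Ω_n`. -/
def OmegaMem (n a b : ℕ) : Prop :=
  1 ≤ a ∧ a ≤ b ∧ b ≤ n ∧ a ∣ n ∧ b ∣ n ∧ Nat.gcd a b = 1

/-- The reflection system `L⁽ⁿ⁾₍ₐ,ᵦ₎`. -/
def Lab (n a b : ℕ) : Set ℍˣ :=
  {x | ∃ m, 1 ≤ m ∧ m ≤ 2 * n / a ∧ x = omegaU n ^ (m * a)} ∪
  {x | ∃ l, 1 ≤ l ∧ l ≤ 2 * n / b ∧ x = omegaU n ^ (l * b) * jU}

/-- The reflection group `G(n, a, b, r)`. -/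
def Gnabr (n a b r : ℕ) : Subgroup GL2H :=
  Subgroup.closure
    ({Mb 1, Mb (omegaU n ^ a), Mb jU, Mb (omegaU n ^ b * jU), D1 (omegaU n ^ (2 * n / r))})

section Orbit

variable {K : Type*} [Group K] {L : Set K} {a x y z : K}

lemma circ_circ (a x : K) : circ a (circ a x) = x := by
  simp only [circ]; group

lemma mem_orb_self (L : Set K) (x : K) : x ∈ orb L x :=
  Set.mem_sInter.2 fun _ hS => hS.1

lemma circ_mem_orb (ha : a ∈ L) (hx : x ∈ orb L y) : circ a x ∈ orb L y :=
  Set.mem_sInter.2 fun S hS => hS.2.2 a ha x (Set.mem_sInter.1 hx S hS)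

lemma orb_subset_of {S : Set K} (hy : y ∈ S) (hSL : S ⊆ L)
    (hS : ∀ a ∈ L, ∀ x ∈ S, circ a x ∈ S) : orb L y ⊆ S :=
  Set.sInter_subset_of_mem ⟨hy, hSL, hS⟩

lemma orb_subset (hL : CircClosed L) (hy : y ∈ L) : orb L y ⊆ L :=
  orb_subset_of hy subset_rfl hL

lemma orb_subset_orb (hL : CircClosed L) (hz : z ∈ L) (hx : x ∈ orb L z) :
    orb L x ⊆ orb L z :=
  orb_subset_of hx (orb_subset hL hz) fun _ ha _ hu => circ_mem_orb ha hu

lemma mem_orb_comm (hL : CircClosed L) (hy : y ∈ L) (hx : x ∈ orb L y) : y ∈ orb L x := by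
  have key : orb L y ⊆ {v | v ∈ L ∧ y ∈ orb L v} := by
    refine orb_subset_of ⟨hy, mem_orb_self L y⟩ (fun v hv => hv.1) ?_
    rintro a ha v ⟨hv, hyv⟩
    have hav : circ a v ∈ L := hL a ha v hv
    have hv' : v ∈ orb L (circ a v) := by
      simpa only [circ_circ] using circ_mem_orb ha (mem_orb_self L (circ a v))
    exact ⟨hav, orb_subset_orb hL hav hv' hyv⟩
  exact (key hx).2

lemma orb_eq_orb_iff (hL : CircClosed L) (hx : x ∈ L) (hy : y ∈ L) :
    orb L x = orb L y ↔ x ∈ orb L y :=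
  ⟨fun h => h ▸ mem_orb_self L x, fun h =>
    (orb_subset_orb hL hy h).antisymm (orb_subset_orb hL hx (mem_orb_comm hL hy h))⟩

end Orbit

section Dicyclic

variable {G : Type*} [Group G] {w j : G} {N a b : ℕ}

/-- `L⁽ⁿ⁾₍ₐ,ᵦ₎` for arbitrary `w`, `j`, with exponents ranging over all multiples in `ℤ`
(see `Lab_eq_dicyclicSystem`). -/
def dicyclicSystem (w j : G) (a b : ℕ) : Set G :=
  {x | ∃ e : ℤ, (a : ℤ) ∣ e ∧ x = w ^ e} ∪ {x | ∃ e : ℤ, (b : ℤ) ∣ e ∧ x = w ^ e * j}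

lemma zpow_mem_dicyclicSystem {e : ℤ} (he : (a : ℤ) ∣ e) : w ^ e ∈ dicyclicSystem w j a b :=
  Or.inl ⟨e, he, rfl⟩

lemma zpow_mul_mem_dicyclicSystem {e : ℤ} (he : (b : ℤ) ∣ e) :
    w ^ e * j ∈ dicyclicSystem w j a b :=
  Or.inr ⟨e, he, rfl⟩

lemma mul_zpow_eq_zpow_neg_mul (hwj : w * j * w = j) (e : ℤ) : j * w ^ e = w ^ (-e) * j := by
  have h : SemiconjBy j w w⁻¹ := by
    simpa [SemiconjBy, mul_assoc] using congrArg (w⁻¹ * ·) hwj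
  simpa [SemiconjBy, _root_.inv_zpow'] using h.zpow_right e

lemma circ_zpow_zpow (u v : ℤ) : circ (w ^ u) (w ^ v) = w ^ (2 * u - v) := by
  simp only [circ]; group

lemma circ_zpow_mul_zpow_mul (u v : ℤ) :
    circ (w ^ u * j) (w ^ v * j) = w ^ (2 * u - v) * j := by
  simp only [circ]; group

lemma one_mem_dicyclicSystem : (1 : G) ∈ dicyclicSystem w j a b :=
  Or.inl ⟨0, dvd_zero _, (zpow_zero w).symm⟩

lemma right_mem_dicyclicSystem : j ∈ dicyclicSystem w j a b :=
  Or.inr ⟨0, dvd_zero _, by rw [zpow_zero, one_mul]⟩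

lemma zpow_ne_zpow_of_two_mul_dvd (hw : orderOf w = 2 * N) (ha : 0 < a) (h2a : 2 * a ∣ N)
    {e : ℤ} (he : 2 * (a : ℤ) ∣ e) : w ^ (a : ℤ) ≠ w ^ e := by
  intro h
  rw [zpow_eq_zpow_iff_modEq, hw] at h
  have h2a2N : 2 * (a : ℤ) ∣ ((2 * N : ℕ) : ℤ) := by exact_mod_cast h2a.mul_left 2
  have h2aa : 2 * (a : ℤ) ∣ a := by simpa using dvd_sub he (h2a2N.trans h.dvd)
  have := Int.le_of_dvd (by exact_mod_cast ha) h2aa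
  omega

variable (hwj : w * j * w = j) (hj : j * j = w ^ N)
include hwj hj

lemma circ_zpow_mul_zpow (u v : ℤ) : circ (w ^ u * j) (w ^ v) = w ^ (v + N) := by
  calc circ (w ^ u * j) (w ^ v)
      = w ^ u * (j * w ^ (u - v)) * j := by simp only [circ]; group
    _ = w ^ u * (w ^ (-(u - v)) * j) * j := by rw [mul_zpow_eq_zpow_neg_mul hwj]
    _ = w ^ v * (j * j) := by group
    _ = w ^ (v + N) := by rw [hj, _root_.zpow_add, zpow_natCast]

lemma circ_zpow_zpow_mul (u v : ℤ) : circ (w ^ u) (w ^ v * j) = w ^ (v - N) * j := by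
  calc circ (w ^ u) (w ^ v * j)
      = w ^ u * (j * j)⁻¹ * (j * w ^ (u - v)) := by simp only [circ]; group
    _ = w ^ u * (w ^ N)⁻¹ * (w ^ (-(u - v)) * j) := by rw [hj, mul_zpow_eq_zpow_neg_mul hwj]
    _ = w ^ (v - N) * j := by rw [← zpow_natCast]; group

lemma circClosed_dicyclicSystem (ha : a ∣ N) (hb : b ∣ N) :
    CircClosed (dicyclicSystem w j a b) := by
  have haN : (a : ℤ) ∣ N := Int.natCast_dvd_natCast.2 ha
  have hbN : (b : ℤ) ∣ N := Int.natCast_dvd_natCast.2 hb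
  rintro _ (⟨u, hu, rfl⟩ | ⟨u, hu, rfl⟩) _ (⟨v, hv, rfl⟩ | ⟨v, hv, rfl⟩)
  · rw [circ_zpow_zpow]
    exact zpow_mem_dicyclicSystem (dvd_sub (hu.mul_left 2) hv)
  · rw [circ_zpow_zpow_mul hwj hj]
    exact zpow_mul_mem_dicyclicSystem (dvd_sub hv hbN)
  · rw [circ_zpow_mul_zpow hwj hj]
    exact zpow_mem_dicyclicSystem (dvd_add hv haN)
  · rw [circ_zpow_mul_zpow_mul]
    exact zpow_mul_mem_dicyclicSystem (dvd_sub (hu.mul_left 2) hv)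

lemma orb_one_subset (h2a : 2 * a ∣ N) :
    orb (dicyclicSystem w j a b) 1 ⊆ {x | ∃ e : ℤ, 2 * (a : ℤ) ∣ e ∧ x = w ^ e} := by
  have h2aN : 2 * (a : ℤ) ∣ N := by exact_mod_cast h2a
  refine orb_subset_of ⟨0, dvd_zero _, (zpow_zero w).symm⟩
    (fun _ ⟨e, he, hx⟩ => Or.inl ⟨e, (dvd_mul_left _ _).trans he, hx⟩) ?_
  rintro _ (⟨u, hu, rfl⟩ | ⟨u, -, rfl⟩) _ ⟨e, he, rfl⟩
  · exact ⟨_, dvd_sub (mul_dvd_mul_left 2 hu) he, circ_zpow_zpow u e⟩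
  · exact ⟨_, dvd_add he h2aN, circ_zpow_mul_zpow hwj hj u e⟩

lemma orb_right_subset (h2b : 2 * b ∣ N) :
    orb (dicyclicSystem w j a b) j ⊆ {x | ∃ e : ℤ, 2 * (b : ℤ) ∣ e ∧ x = w ^ e * j} := by
  have h2bN : 2 * (b : ℤ) ∣ N := by exact_mod_cast h2b
  refine orb_subset_of ⟨0, dvd_zero _, by rw [zpow_zero, one_mul]⟩
    (fun _ ⟨e, he, hx⟩ => Or.inr ⟨e, (dvd_mul_left _ _).trans he, hx⟩) ?_
  rintro _ (⟨u, -, rfl⟩ | ⟨u, hu, rfl⟩) _ ⟨e, he, rfl⟩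
  · exact ⟨_, dvd_sub he h2bN, circ_zpow_zpow_mul hwj hj u e⟩
  · exact ⟨_, dvd_sub (mul_dvd_mul_left 2 hu) he, circ_zpow_mul_zpow_mul u e⟩

lemma orb_pow_eq_orb_one_iff (hw : orderOf w = 2 * N) (ha : 0 < a) (haN : a ∣ N) (hbN : b ∣ N) :
    orb (dicyclicSystem w j a b) (w ^ a) = orb (dicyclicSystem w j a b) 1 ↔ Odd (N / a) := by
  have hwa : w ^ a ∈ dicyclicSystem w j a b := by
    rw [← zpow_natCast]; exact zpow_mem_dicyclicSystem dvd_rfl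
  rw [orb_eq_orb_iff (circClosed_dicyclicSystem hwj hj haN hbN) hwa one_mem_dicyclicSystem]
  obtain ⟨q, rfl⟩ := haN
  rw [Nat.mul_div_cancel_left q ha]
  constructor
  · rw [← Nat.not_even_iff_odd]
    rintro hmem ⟨t, rfl⟩
    obtain ⟨e, he, hae⟩ := orb_one_subset hwj hj ⟨t, by ring⟩ hmem
    exact zpow_ne_zpow_of_two_mul_dvd hw ha ⟨t, by ring⟩ he (by rwa [zpow_natCast])
  · rintro ⟨t, rfl⟩
    have hN : w ^ ((a * (2 * t + 1) : ℕ) : ℤ) ∈ orb (dicyclicSystem w j a b) 1 := by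
      have := circ_mem_orb right_mem_dicyclicSystem (mem_orb_self (dicyclicSystem w j a b) 1)
      rwa [circ, inv_one, mul_one, hj, ← zpow_natCast] at this
    have := circ_mem_orb (zpow_mem_dicyclicSystem (dvd_mul_right (a : ℤ) (t + 1))) hN
    rwa [circ_zpow_zpow, show 2 * (a * (t + 1) : ℤ) - ((a * (2 * t + 1) : ℕ) : ℤ) = a by
      push_cast; ring, zpow_natCast] at this

lemma orb_pow_mul_eq_orb_iff (hw : orderOf w = 2 * N) (hb : 0 < b) (haN : a ∣ N) (hbN : b ∣ N) :
    orb (dicyclicSystem w j a b) (w ^ b * j) = orb (dicyclicSystem w j a b) j ↔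
      Odd (N / b) := by
  have hwb : w ^ b * j ∈ dicyclicSystem w j a b := by
    rw [← zpow_natCast]; exact zpow_mul_mem_dicyclicSystem dvd_rfl
  rw [orb_eq_orb_iff (circClosed_dicyclicSystem hwj hj haN hbN) hwb right_mem_dicyclicSystem]
  obtain ⟨q, rfl⟩ := hbN
  rw [Nat.mul_div_cancel_left q hb]
  constructor
  · rw [← Nat.not_even_iff_odd]
    rintro hmem ⟨t, rfl⟩
    obtain ⟨e, he, hbe⟩ := orb_right_subset hwj hj ⟨t, by ring⟩ hmem
    exact zpow_ne_zpow_of_two_mul_dvd hw hb ⟨t, by ring⟩ he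
      (by rw [zpow_natCast]; exact mul_right_cancel hbe)
  · rintro ⟨t, rfl⟩
    set u : ℤ := b * (t + 1)
    have hju : circ (w ^ u * j) j = w ^ (2 * u) * j := by
      simpa using circ_zpow_mul_zpow_mul (w := w) (j := j) u 0
    have h1u : circ 1 (w ^ (2 * u) * j) = w ^ (2 * u - (b * (2 * t + 1) : ℕ)) * j := by
      simpa using circ_zpow_zpow_mul hwj hj 0 (2 * u)
    have h2u := circ_mem_orb (zpow_mul_mem_dicyclicSystem (dvd_mul_right (b : ℤ) (t + 1)))
      (mem_orb_self (dicyclicSystem w j a b) j)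
    rw [hju] at h2u
    have := circ_mem_orb one_mem_dicyclicSystem h2u
    rwa [h1u, show 2 * u - ((b * (2 * t + 1) : ℕ) : ℤ) = b by push_cast; ring, zpow_natCast] at this

end Dicyclic

lemma exists_pow_mul_eq_zpow {G : Type*} [Group G] {x : G} {d : ℕ} (hx : 0 < orderOf x)
    (hd : d ∣ orderOf x) {e : ℤ} (he : (d : ℤ) ∣ e) :
    ∃ m : ℕ, 1 ≤ m ∧ m ≤ orderOf x / d ∧ x ^ (m * d) = x ^ e := by
  obtain ⟨s, rfl⟩ := he
  set q := orderOf x / d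
  have hqd : orderOf x = q * d := (Nat.div_mul_cancel hd).symm
  have hq : (0 : ℤ) < q := by
    exact_mod_cast Nat.div_pos (Nat.le_of_dvd hx hd) (Nat.pos_of_dvd_of_pos hd hx)
  have hr := Int.emod_nonneg (s - 1) hq.ne'
  have hrq := Int.emod_lt_of_pos (s - 1) hq
  refine ⟨((s - 1) % q).toNat + 1, by omega, by omega, ?_⟩
  have hms : (((s - 1) % q).toNat + 1 : ℕ) ≡ s [ZMOD q] := by
    push_cast
    rw [Int.toNat_of_nonneg hr]
    simpa using (Int.mod_modEq (s - 1) q).add_right 1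
  rw [← zpow_natCast, zpow_eq_zpow_iff_modEq, hqd, Nat.cast_mul, mul_comm (d : ℤ) s]
  exact hms.mul_right' (c := (d : ℤ))

lemma coe_omegaU_eq_ofComplex (n : ℕ) :
    (omegaU n : ℍ) = Quaternion.ofComplex (Complex.exp (↑(Real.pi / n) * Complex.I)) := by
  show (⟨_, _, 0, 0⟩ : ℍ) = _
  ext
  · exact (Complex.exp_ofReal_mul_I_re _).symm
  · exact (Complex.exp_ofReal_mul_I_im _).symm
  · rfl
  · rfl

lemma orderOf_omegaU {n : ℕ} (hn : 0 < n) : orderOf (omegaU n) = 2 * n := by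
  have hexp : Complex.exp (2 * Real.pi * Complex.I / (2 * n : ℕ)) =
      Complex.exp (↑(Real.pi / n) * Complex.I) := by
    have : (n : ℂ) ≠ 0 := by exact_mod_cast hn.ne'
    push_cast
    field_simp
  rw [← orderOf_units, coe_omegaU_eq_ofComplex, ← hexp]
  exact (orderOf_injective (Quaternion.ofComplex : ℂ →ₐ[ℝ] ℍ).toMonoidHom
    (RingHom.injective (Quaternion.ofComplex : ℂ →ₐ[ℝ] ℍ).toRingHom) _).trans
    (Complex.isPrimitiveRoot_exp (2 * n) (by positivity)).eq_orderOf.symm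

lemma omegaU_pow_self {n : ℕ} (hn : 0 < n) : omegaU n ^ n = -1 := by
  have : (n : ℂ) ≠ 0 := by exact_mod_cast hn.ne'
  apply Units.ext
  rw [Units.val_pow_eq_pow_val, coe_omegaU_eq_ofComplex, ← map_pow, ← Complex.exp_nat_mul,
    show (n : ℂ) * (↑(Real.pi / n) * Complex.I) = Real.pi * Complex.I by push_cast; field_simp,
    Complex.exp_pi_mul_I, map_neg, map_one, Units.val_neg, Units.val_one]

lemma jU_mul_jU : jU * jU = -1 := by
  have key : (⟨0, 0, 1, 0⟩ : ℍ) * ⟨0, 0, 1, 0⟩ = -1 := by ext <;> simp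
  exact Units.ext key

lemma omegaU_mul_jU_mul_omegaU (n : ℕ) : omegaU n * jU * omegaU n = jU := by
  have key : (⟨Real.cos (Real.pi / n), Real.sin (Real.pi / n), 0, 0⟩ : ℍ) * ⟨0, 0, 1, 0⟩ *
      ⟨Real.cos (Real.pi / n), Real.sin (Real.pi / n), 0, 0⟩ = ⟨0, 0, 1, 0⟩ := by
    have := Real.sin_sq_add_cos_sq (Real.pi / n)
    ext <;> simp <;> nlinarith
  exact Units.ext key

lemma Lab_eq_dicyclicSystem {n a b : ℕ} (hn : 0 < n) (ha : a ∣ n) (hb : b ∣ n) :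
    Lab n a b = dicyclicSystem (omegaU n) jU a b := by
  have hord := orderOf_omegaU hn
  have hpos : 0 < orderOf (omegaU n) := by omega
  ext x
  simp only [Lab, dicyclicSystem, Set.mem_union, Set.mem_ofPred_eq, ← hord]
  refine or_congr ⟨?_, ?_⟩ ⟨?_, ?_⟩
  · rintro ⟨m, -, -, rfl⟩
    exact ⟨(m * a : ℕ), Int.natCast_dvd_natCast.2 (dvd_mul_left a m), (zpow_natCast _ _).symm⟩
  · rintro ⟨e, he, rfl⟩
    obtain ⟨m, hm1, hm2, hm⟩ := exists_pow_mul_eq_zpow hpos (hord ▸ ha.mul_left 2) he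
    exact ⟨m, hm1, hm2, hm.symm⟩
  · rintro ⟨m, -, -, rfl⟩
    exact ⟨(m * b : ℕ), Int.natCast_dvd_natCast.2 (dvd_mul_left b m), by rw [zpow_natCast]⟩
  · rintro ⟨e, he, rfl⟩
    obtain ⟨m, hm1, hm2, hm⟩ := exists_pow_mul_eq_zpow hpos (hord ▸ hb.mul_left 2) he
    exact ⟨m, hm1, hm2, by rw [hm]⟩

theorem statement_12_general (n a b : ℕ) (hab : OmegaMem n a b) :
    (orb (Lab n a b) (omegaU n ^ a) = orb (Lab n a b) 1 ↔ Odd (n / a)) ∧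
    (orb (Lab n a b) (omegaU n ^ b * jU) = orb (Lab n a b) jU ↔ Odd (n / b)) := by
  obtain ⟨ha, hab_le, hbn, haN, hbN, -⟩ := hab
  have hn : 0 < n := by omega
  have hwj := omegaU_mul_jU_mul_omegaU n
  have hj : jU * jU = omegaU n ^ n := by rw [jU_mul_jU, omegaU_pow_self hn]
  rw [Lab_eq_dicyclicSystem hn haN hbN]
  exact ⟨orb_pow_eq_orb_one_iff hwj hj (orderOf_omegaU hn) ha haN hbN,
    orb_pow_mul_eq_orb_iff hwj hj (orderOf_omegaU hn) (by omega) haN hbN⟩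

theorem statement_12 (n a b : ℕ) (hn : 2 ≤ n) (hab : OmegaMem n a b) :
    (orb (Lab n a b) (omegaU n ^ a) = orb (Lab n a b) 1 ↔ Odd (n / a)) ∧
    (orb (Lab n a b) (omegaU n ^ b * jU) = orb (Lab n a b) jU ↔ Odd (n / b)) :=
  statement_12_general n a b hab

end
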